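/- Φ_n is a bijection (a permutation of {0,1}^n), and the orbit of (0,0,…,0) under Φ_n is all of {0,1}^n. -/

import Mathlib

/-! Read the XOR-differences of consecutive bits of `x` (the last bit counting as a difference
with a padding `0`) as a binary number `r_n x`. An alternating prefix of length `m` gives
trailing ones in the differences, followed by a zero at position `m` unless the prefix is all
of `x` and ends in `1`; making the prefix constant with the opposite last bit clears those
ones and sets that zero. So `Φ_n` is binary increment, `r_n (Φ_n x) ≡ r_n x + 1 (mod 2^n)`,
and the first `2^n` iterates of any point are distinct, hence exhaust `{0,1}^n`. -/

/-- The prefix `(x₁,…,x_m)` (1-indexed) of `x ∈ {0,1}ⁿ` is alternating: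
consecutive entries differ. -/
def AltPrefix (n : ℕ) (x : Fin n → Bool) (m : ℕ) : Prop :=
  ∀ j : ℕ, j + 1 < m → ∀ hn : j + 1 < n,
    x ⟨j, Nat.lt_of_succ_lt hn⟩ ≠ x ⟨j + 1, hn⟩

instance (n : ℕ) (x : Fin n → Bool) : DecidablePred (AltPrefix n x) := fun m =>
  decidable_of_iff
    (∀ j ∈ Finset.range n, j + 1 < m → ∀ hn : j + 1 < n,
      x ⟨j, Nat.lt_of_succ_lt hn⟩ ≠ x ⟨j + 1, hn⟩)
    (by
      constructor
      · intro h j hj hn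
        exact h j (Finset.mem_range.mpr (Nat.lt_of_succ_lt hn)) hj hn
      · intro h j _ hj hn
        exact h j hj hn)

/-- The largest `m ≤ n` such that the prefix `(x₁,…,x_m)` is alternating. -/
def mIdx (n : ℕ) (x : Fin n → Bool) : ℕ :=
  Nat.findGreatest (AltPrefix n x) n

/-- The map `Φₙ : {0,1}ⁿ → {0,1}ⁿ`: with `m` the largest index such that
`(x₁,…,x_m)` is alternating, `yᵢ = 1 - x_m` for `i ≤ m` and `yᵢ = xᵢ` for `i > m`. -/
def Phi (n : ℕ) (x : Fin n → Bool) : Fin n → Bool :=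
  fun i =>
    if _h : (i : ℕ) < mIdx n x then
      ! x ⟨mIdx n x - 1, by
        have h2 : mIdx n x ≤ n := Nat.findGreatest_le n
        omega⟩
    else x i

/-- The alternating vector `(…,1,0,1,0)`: `x_j = 1` iff `j ≢ n (mod 2)` (1-indexed). -/
def altEnd0 (n : ℕ) : Fin n → Bool := fun i => decide (((i : ℕ) + 1) % 2 ≠ n % 2)

/-- The alternating vector `(…,0,1,0,1)`: `x_j = 1` iff `j ≡ n (mod 2)` (1-indexed). -/
def altEnd1 (n : ℕ) : Fin n → Bool := fun i => decide (((i : ℕ) + 1) % 2 = n % 2)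

/-- The bit `c_j` (0-indexed `j`): XOR of consecutive bits `x_j, x_{j+1}`,
and for the last position the bit itself. -/
def cbit (n : ℕ) (x : Fin n → Bool) (j : Fin n) : Bool :=
  if h : (j : ℕ) + 1 < n then xor (x j) (x ⟨(j : ℕ) + 1, h⟩) else x j

/-- The map `rₙ(x) = Σ_{j=1}^n c_j 2^{j-1}`. -/
def rmap (n : ℕ) (x : Fin n → Bool) : ℕ :=
  ∑ j : Fin n, (if cbit n x j then 1 else 0) * 2 ^ (j : ℕ)

/-- The recursively defined weights `w_{n,i,j}` (all indices 1-based; values for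
indices outside `1 ≤ i, j ≤ n` are irrelevant junk). -/
def wgt : ℕ → ℕ → ℕ → ℤ
  | 0, _, _ => 0
  | 1, _, _ => -1
  | (n+2), i, j =>
    if i = n + 2 then
      (if j = n + 2 then (n : ℤ)
       else if j % 2 = (n + 2) % 2 then -1 else 1)
    else if i = n + 1 then
      (if j = n + 2 then -1
       else if j = n + 1 then wgt (n+1) (n+1) j + 1
       else wgt (n+1) (n+1) j)
    else
      (if j = n + 2 then -1
       else if j = n + 1 then wgt (n+1) i j
       else wgt (n+1) i j + wgt n i j)

/-- The recursively defined thresholds `θ_{n,i}`. -/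
def thr : ℕ → ℕ → ℤ
  | 0, _ => 0
  | 1, _ => 0
  | (n+2), i =>
    if i = n + 2 then (((n + 2) / 2 : ℕ) : ℤ)
    else if i = n + 1 then thr (n+1) (n+1)
    else thr (n+1) i + thr n i - 1

open Finset

def bitsValue (c : ℕ → Bool) (n : ℕ) : ℕ :=
  ∑ j ∈ range n, (if c j then 1 else 0) * 2 ^ j

theorem bitsValue_add_one_of_forall_true {c : ℕ → Bool} {k : ℕ} (h : ∀ j < k, c j = true) :
    bitsValue c k + 1 = 2 ^ k := by
  induction k with
  | zero => simp [bitsValue]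
  | succ k ih =>
    rw [bitsValue, sum_range_succ, ← bitsValue, h k k.lt_succ_self, pow_succ]
    have := ih fun j hj => h j (by omega)
    simp only [if_true, one_mul]
    omega

theorem bitsValue_eq_zero_of_forall_false {c : ℕ → Bool} {k : ℕ} (h : ∀ j < k, c j = false) :
    bitsValue c k = 0 :=
  sum_eq_zero fun j hj => by simp [h j (mem_range.1 hj)]

theorem bitsValue_modEq_add_one_of_carry {c c' : ℕ → Bool} {k n : ℕ} (hk : k < n)
    (hlow : ∀ j < k, c j = true ∧ c' j = false) (hflip : c' k = !c k)
    (hhigh : ∀ j, k < j → c' j = c j) (hwrap : c k = true → k + 1 = n) :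
    bitsValue c' n ≡ bitsValue c n + 1 [MOD 2 ^ n] := by
  have hsplit : ∀ d : ℕ → Bool, bitsValue d n = bitsValue d k + (if d k then 1 else 0) * 2 ^ k
      + ∑ j ∈ Ico (k + 1) n, (if d j then 1 else 0) * 2 ^ j := fun d => by
    rw [bitsValue, ← sum_range_add_sum_Ico _ hk, sum_range_succ, bitsValue]
  have hhigh_sum : ∑ j ∈ Ico (k + 1) n, (if c' j then 1 else 0) * 2 ^ j
      = ∑ j ∈ Ico (k + 1) n, (if c j then 1 else 0) * 2 ^ j :=
    sum_congr rfl fun j hj => by rw [hhigh j (mem_Ico.1 hj).1]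
  have hones := bitsValue_add_one_of_forall_true fun j hj => (hlow j hj).1
  have hzeros := bitsValue_eq_zero_of_forall_false fun j hj => (hlow j hj).2
  rw [hsplit c, hsplit c', hhigh_sum, hzeros, hflip]
  cases hck : c k
  · simp only [Bool.not_false, Bool.false_eq_true, if_true, if_false]
    exact congrArg (· % 2 ^ n) (by omega)
  · obtain rfl := hwrap hck
    simp only [Bool.not_true, Bool.false_eq_true, if_true, if_false, Ico_self, sum_empty,
      zero_mul, one_mul, add_zero]
    refine Nat.ModEq.symm (Nat.modEq_zero_iff_dvd.2 ?_)
    exact ⟨1, by rw [pow_succ]; omega⟩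

def zeroExtend (n : ℕ) (x : Fin n → Bool) (j : ℕ) : Bool :=
  if h : j < n then x ⟨j, h⟩ else false

-- Padding makes the last bit `c_n = x_n` an instance of the rule `c_j = x_j ⊕ x_{j+1}`.
theorem rmap_eq_bitsValue (n : ℕ) (x : Fin n → Bool) :
    rmap n x = bitsValue (fun j => zeroExtend n x j ^^ zeroExtend n x (j + 1)) n := by
  rw [rmap, bitsValue, ← Fin.sum_univ_eq_sum_range]
  refine sum_congr rfl fun j _ => ?_
  simp only [cbit, zeroExtend, j.isLt, dif_pos, Fin.eta]
  split_ifs <;> simp_all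

section mIdx

variable {n : ℕ} (x : Fin n → Bool)

theorem mIdx_le : mIdx n x ≤ n :=
  Nat.findGreatest_le n

theorem one_le_mIdx (hn : 0 < n) : 1 ≤ mIdx n x :=
  Nat.le_findGreatest hn fun j hj => absurd hj (by omega)

theorem altPrefix_mIdx : AltPrefix n x (mIdx n x) :=
  Nat.findGreatest_spec (Nat.zero_le n) fun j hj => absurd hj (by omega)

theorem zeroExtend_ne_succ_of_succ_lt_mIdx {j : ℕ} (hj : j + 1 < mIdx n x) :
    zeroExtend n x j ≠ zeroExtend n x (j + 1) := by
  have hjn : j + 1 < n := hj.trans_le (mIdx_le x)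
  simpa [zeroExtend, hjn, Nat.lt_of_succ_lt hjn] using altPrefix_mIdx x j hj hjn

theorem zeroExtend_pred_mIdx_eq (hpos : 1 ≤ mIdx n x) (hlt : mIdx n x < n) :
    zeroExtend n x (mIdx n x - 1) = zeroExtend n x (mIdx n x) := by
  by_contra hne
  refine Nat.findGreatest_is_greatest (mIdx n x).lt_succ_self hlt fun j hj hjn => ?_
  rcases (Nat.lt_succ_iff.1 hj).lt_or_eq with hj | hj
  · exact altPrefix_mIdx x j hj hjn
  · obtain rfl : j = mIdx n x - 1 := by omega
    have hpred : mIdx n x - 1 < n := by omega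
    simpa [zeroExtend, hjn, Nat.sub_add_cancel hpos, hlt, hpred] using hne

theorem zeroExtend_Phi (j : ℕ) :
    zeroExtend n (Phi n x) j =
      if j < mIdx n x then !zeroExtend n x (mIdx n x - 1) else zeroExtend n x j := by
  have := mIdx_le x
  unfold zeroExtend Phi
  split_ifs <;> first | rfl | omega

end mIdx

theorem rmap_Phi_modEq (n : ℕ) (x : Fin n → Bool) :
    rmap n (Phi n x) ≡ rmap n x + 1 [MOD 2 ^ n] := by
  rcases n.eq_zero_or_pos with rfl | hn
  · exact Nat.modEq_one
  have hpos := one_le_mIdx x hn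
  have hle := mIdx_le x
  rw [rmap_eq_bitsValue, rmap_eq_bitsValue]
  refine bitsValue_modEq_add_one_of_carry (k := mIdx n x - 1) (by omega) ?_ ?_ ?_ ?_
  · intro j hj
    simp only [zeroExtend_Phi, show j < mIdx n x by omega, show j + 1 < mIdx n x by omega,
      if_true, Bool.xor_self, and_true]
    simpa using zeroExtend_ne_succ_of_succ_lt_mIdx x (j := j) (by omega)
  · simp only [zeroExtend_Phi, Nat.sub_add_cancel hpos, Nat.sub_lt_self one_pos hpos,
      lt_irrefl, if_true, if_false]
    cases zeroExtend n x (mIdx n x - 1) <;> simp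
  · intro j hj
    simp only [zeroExtend_Phi, show ¬ j < mIdx n x by omega, show ¬ j + 1 < mIdx n x by omega,
      if_false]
  · intro hc
    by_contra hne_top
    rw [Nat.sub_add_cancel hpos,
      zeroExtend_pred_mIdx_eq x hpos (by omega), Bool.xor_self] at hc
    exact Bool.false_ne_true hc

-- The first `card α` iterates of `a` have pairwise distinct potentials modulo `card α`.
theorem exists_iterate_eq_of_modEq_add_one {α : Type*} [Fintype α] {f : α → α} {r : α → ℕ}
    (hr : ∀ a, r (f a) ≡ r a + 1 [MOD Fintype.card α]) (a b : α) : ∃ t, f^[t] a = b := by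
  have hiter : ∀ t, r (f^[t] a) ≡ r a + t [MOD Fintype.card α] := by
    intro t
    induction t with
    | zero => rfl
    | succ t ih =>
      rw [Function.iterate_succ_apply', ← add_assoc]
      exact (hr _).trans (ih.add_right 1)
  have hinj : Function.Injective fun t : Fin (Fintype.card α) => f^[t] a := by
    intro s t hst
    have hst' : r a + s ≡ r a + t [MOD Fintype.card α] :=
      (hiter s).symm.trans (congrArg r hst ▸ hiter t)
    exact Fin.ext ((Nat.ModEq.add_left_cancel' _ hst').eq_of_lt_of_lt s.isLt t.isLt)
  obtain ⟨t, rfl⟩ := ((Fintype.bijective_iff_injective_and_card _).2 ⟨hinj, by simp⟩).2 b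
  exact ⟨t, rfl⟩

theorem Phi_bijective_orbit_general (n : ℕ) :
    Function.Bijective (Phi n) ∧
    ∀ y : Fin n → Bool, ∃ t : ℕ, (Phi n)^[t] (fun _ => false) = y := by
  have hr : ∀ x, rmap n (Phi n x) ≡ rmap n x + 1 [MOD Fintype.card (Fin n → Bool)] := by
    simpa using rmap_Phi_modEq n
  have hsurj : Function.Surjective (Phi n) := fun y => by
    obtain ⟨t, ht⟩ := exists_iterate_eq_of_modEq_add_one hr (Phi n y) y
    refine ⟨(Phi n)^[t] y, ?_⟩
    rwa [← Function.iterate_succ_apply' (Phi n), Function.iterate_succ_apply]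
  exact ⟨Finite.surjective_iff_bijective.1 hsurj, exists_iterate_eq_of_modEq_add_one hr _⟩

/-- `Φₙ` is a permutation of `{0,1}ⁿ` and the orbit of `(0,…,0)` under `Φₙ`
is all of `{0,1}ⁿ`. -/
theorem Phi_bijective_orbit (n : ℕ) (hn : 0 < n) :
    Function.Bijective (Phi n) ∧
    ∀ y : Fin n → Bool, ∃ t : ℕ, (Phi n)^[t] (fun _ => false) = y :=
  Phi_bijective_orbit_general n
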